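/- If G(z) satisfies the cubic equation z²G³ + (ρζ + ρ - 2)zG² + ((ρζ-1)(ρ-1) - ρz)G + ρ = 0, then for t with G(z) = t the inverse function is z = (1 - (1-ζ)t - sqrt(1 + (1-ζ)²t² - 2(1+ζ)t))/(2ζt²), for the appropriate branch of the square root. -/
import Mathlib


/-- If `G(z) = t` satisfies the cubic
`z²G³ + (ρζ+ρ-2)zG² + ((ρζ-1)(ρ-1)-ρz)G + ρ = 0` (with `R = T`, i.e. `ρζ = 1`),
then `z = (1 - (1-ζ)t ± √(1 + (1-ζ)²t² - 2(1+ζ)t))/(2ζt²)` for the appropriate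
branch of the square root. -/
theorem stmt_2 (ρ ζ : ℝ) (hρ : 0 < ρ) (hζ : 0 < ζ) (hρζ : ρ * ζ = 1)
    (z t : ℂ) (ht : t ≠ 0)
    (hcubic : z^2 * t^3 + ((ρ:ℂ)*ζ + ρ - 2) * z * t^2 +
      (((ρ:ℂ)*ζ - 1)*((ρ:ℂ) - 1) - (ρ:ℂ)*z) * t + (ρ:ℂ) = 0) :
    let s : ℂ := (1 + (1 - (ζ:ℂ))^2 * t^2 - 2*(1 + (ζ:ℂ))*t) ^ ((1:ℂ)/2)
    z = (1 - (1 - (ζ:ℂ))*t + s)/(2*(ζ:ℂ)*t^2) ∨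
      z = (1 - (1 - (ζ:ℂ))*t - s)/(2*(ζ:ℂ)*t^2) := by
  intro s
  have hζ' : (ζ:ℂ) ≠ 0 := by exact_mod_cast hζ.ne'
  have hρζ' : (ρ:ℂ) * (ζ:ℂ) = 1 := by exact_mod_cast hρζ
  have hden : 2*(ζ:ℂ)*t^2 ≠ 0 := by
    simp [hζ', ht]
  have hs : s^2 = 1 + (1 - (ζ:ℂ))^2 * t^2 - 2*(1 + (ζ:ℂ))*t := by
    have h2 : ((1:ℂ)/2) = ((2:ℕ):ℂ)⁻¹ := by norm_num
    have := Complex.cpow_nat_inv_pow (1 + (1 - (ζ:ℂ))^2 * t^2 - 2*(1 + (ζ:ℂ))*t)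
      (two_ne_zero)
    simpa [s, h2] using this
  have hQ : (ζ:ℂ)*z^2*t^3 + ((1-(ζ:ℂ))*t^2 - t)*z + 1 = 0 := by
    linear_combination (ζ:ℂ) * hcubic -
      (((ζ:ℂ)+1)*z*t^2 + (ζ:ℂ)*((ρ:ℂ)-1)*t - z*t + 1) * hρζ'
  have key : (2*(ζ:ℂ)*t^3*z - (1-(1-(ζ:ℂ))*t)*t - t*s) *
      (2*(ζ:ℂ)*t^3*z - (1-(1-(ζ:ℂ))*t)*t + t*s) = 0 := by
    linear_combination 4*(ζ:ℂ)*t^3 * hQ - t^2 * hs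
  rcases mul_eq_zero.mp key with h | h
  · left
    rw [eq_div_iff hden]
    refine mul_left_cancel₀ ht ?_
    linear_combination h
  · right
    rw [eq_div_iff hden]
    refine mul_left_cancel₀ ht ?_
    linear_combination h
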